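/- arXiv:2106.03202 — 2 statements merged into one kernel-verified Lean document; each statement's English description precedes it below -/
import Mathlib

section
/- For all n ≥ -1, the singular word w_n is not a factor of w_{n+1}. -/
/-- Finite Fibonacci words, shifted: `fw n` is the paper's `f_{n-1}`
(so `fw 0 = f₋₁ = 1`, `fw 1 = f₀ = 0`, `fw (n+2) = fw (n+1) ++ fw n`). -/
def fw : ℕ → List ℕ
  | 0 => [1]
  | 1 => [0]
  | n+2 => fw (n+1) ++ fw n

/-- The penultimate letter of a word (default 0). -/
def penult (l : List ℕ) : ℕ := l.dropLast.getLastD 0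

/-- Singular words, shifted: `sw n` is the paper's `w_{n-2}`
(so `sw 0 = w₋₂ = ε`, `sw 1 = w₋₁ = 0`, `sw 2 = w₀ = 1`, and for the paper's
`n ≥ 1`, `w_n = sw (n+2) = a · f_n · b⁻¹` where `ab` is the length-2 suffix of `f_n`). -/
def sw : ℕ → List ℕ
  | 0 => []
  | 1 => [0]
  | 2 => [1]
  | n+3 => penult (fw (n+2)) :: (fw (n+2)).dropLast

/-- Number of occurrences of `x` as a factor of `w` (counted by starting position). -/
def occ (x w : List ℕ) : ℕ :=
  ((List.range (w.length + 1)).filter (fun i => x.isPrefixOf (w.drop i))).length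

/-- A word is closed if it is a single letter or has a border (a proper factor that
is both a prefix and a suffix) occurring exactly twice in it. -/
def ClosedWord (w : List ℕ) : Prop :=
  w.length = 1 ∨
    ∃ x : List ℕ, x ≠ [] ∧ x.length < w.length ∧ x <+: w ∧ x <:+ w ∧ occ x w = 2

theorem fib_pos' (n : ℕ) : 0 < Nat.fib (n+1) := Nat.fib_pos.mpr (by omega)

theorem fw_len : ∀ n, (fw n).length = Nat.fib (n+1)
  | 0 => rfl
  | 1 => rfl
  | n+2 => by
    have h1 := fw_len (n+1)
    have h2 := fw_len n
    have h3 : Nat.fib (n+3) = Nat.fib (n+1) + Nat.fib (n+2) := Nat.fib_add_two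
    show (fw (n+1) ++ fw n).length = Nat.fib (n+3)
    rw [List.length_append, h1, h2, h3]
    have e : Nat.fib (n+1+1) = Nat.fib (n+2) := rfl
    omega

theorem fw_ne_nil (n : ℕ) : fw n ≠ [] := by
  have h := fw_len n
  have : 0 < Nat.fib (n+1) := fib_pos' n
  intro he; rw [he] at h; simp at h; omega

theorem fw_getLast? : ∀ n, (fw n).getLast? = some ((n+1) % 2)
  | 0 => rfl
  | 1 => rfl
  | n+2 => by
    show (fw (n+1) ++ fw n).getLast? = some ((n+3) % 2)
    rw [List.getLast?_append, fw_getLast? n]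
    have : (n+1) % 2 = (n+3) % 2 := by omega
    simp [← this]

theorem fw_dropLast (n : ℕ) : (fw (n+2)).dropLast = fw (n+1) ++ (fw n).dropLast := by
  show (fw (n+1) ++ fw n).dropLast = _
  rw [List.dropLast_append_of_ne_nil (fw_ne_nil n)]

theorem fw_dropLast_ne_nil (n : ℕ) : (fw (n+2)).dropLast ≠ [] := by
  have h : (fw (n+2)).length = Nat.fib (n+3) := fw_len (n+2)
  have h3 : Nat.fib (n+3) = Nat.fib (n+1) + Nat.fib (n+2) := Nat.fib_add_two
  have p1 := fib_pos' n
  have p2 := fib_pos' (n+1)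
  intro he
  have := congrArg List.length he
  simp [List.length_dropLast, h] at this
  have e : Nat.fib (n+1+1) = Nat.fib (n+2) := rfl
  omega

theorem penult_fw : ∀ n, penult (fw (n+2)) = n % 2
  | 0 => rfl
  | 1 => rfl
  | n+2 => by
    show penult (fw (n+4)) = (n+2) % 2
    have hmod : (n+2) % 2 = n % 2 := by omega
    rw [hmod, ← penult_fw n]
    unfold penult
    rw [fw_dropLast (n+2), List.getLastD_eq_getLast?, List.getLastD_eq_getLast?,
      List.getLast?_append]
    have h := fw_dropLast_ne_nil n
    rw [List.getLast?_eq_getLast h]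
    simp

theorem fw_decomp (n : ℕ) : fw (n+2) = (fw (n+2)).dropLast ++ [(n+3) % 2] := by
  have h := List.dropLast_append_getLast (fw_ne_nil (n+2))
  have h2 : (fw (n+2)).getLast (fw_ne_nil (n+2)) = (n+3) % 2 := by
    have := fw_getLast? (n+2)
    rw [List.getLast?_eq_getLast (fw_ne_nil (n+2))] at this
    simpa using this
  rw [← h2]; exact h.symm

theorem fw_B (m : ℕ) : fw (m+4) =
    ((fw (m+3)).dropLast ++ [penult (fw (m+2))]) ++ ((fw (m+2)).dropLast ++ [penult (fw (m+3))]) := by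
  have e1 : penult (fw (m+2)) = (m+3+1) % 2 := by rw [penult_fw m]; omega
  have e2 : penult (fw (m+3)) = (m+2+1) % 2 := by rw [penult_fw (m+1)]; omega
  rw [e1, e2, ← fw_decomp (m+1), ← fw_decomp m]
  rfl

theorem sw_rec : ∀ n, sw (n+3) = sw (n+1) ++ (sw n ++ sw (n+1))
  | 0 => by decide
  | 1 => by decide
  | 2 => by decide
  | (m+3) => by
    show sw (m+6) = sw (m+4) ++ (sw (m+3) ++ sw (m+4))
    have l6 : sw (m+6) = penult (fw (m+5)) :: (fw (m+5)).dropLast := rfl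
    have l4 : sw (m+4) = penult (fw (m+3)) :: (fw (m+3)).dropLast := rfl
    have l3 : sw (m+3) = penult (fw (m+2)) :: (fw (m+2)).dropLast := rfl
    have hp : penult (fw (m+5)) = penult (fw (m+3)) := by
      rw [penult_fw (m+3), penult_fw (m+1)]; omega
    rw [l6, l4, l3, hp, fw_dropLast (m+3), fw_B m]
    simp

theorem sw_len : ∀ n, (sw n).length = Nat.fib n
  | 0 => rfl
  | 1 => rfl
  | 2 => rfl
  | n+3 => by
    rw [sw_rec n]
    simp [sw_len (n+1), sw_len n]
    have h1 : Nat.fib (n+2) = Nat.fib n + Nat.fib (n+1) := Nat.fib_add_two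
    have h2 : Nat.fib (n+3) = Nat.fib (n+1) + Nat.fib (n+2) := Nat.fib_add_two
    omega

theorem sw_ne_nil (n : ℕ) : sw (n+1) ≠ [] := by
  have h := sw_len (n+1)
  have := fib_pos' n
  intro he; rw [he] at h; simp at h; omega

theorem sw_head? : ∀ n, (sw (n+1)).head? = some (n % 2)
  | 0 => rfl
  | 1 => rfl
  | 2 => by decide
  | n+3 => by
    show (sw (n+4)).head? = some ((n+3) % 2)
    rw [sw_rec (n+1)]
    rw [List.head?_append, sw_head? (n+1)]
    have : (n+1) % 2 = (n+3) % 2 := by omega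
    simp [← this]

theorem sw_getLast? : ∀ n, (sw (n+1)).getLast? = some (n % 2)
  | 0 => rfl
  | 1 => rfl
  | 2 => by decide
  | n+3 => by
    show (sw (n+4)).getLast? = some ((n+3) % 2)
    rw [sw_rec (n+1)]
    rw [List.getLast?_append, List.getLast?_append, sw_getLast? (n+1)]
    have : (n+1) % 2 = (n+3) % 2 := by omega
    simp [← this]

/-- occurrence of `x` in `w` at position `p`. -/
def Occ (x w : List ℕ) (p : ℕ) : Prop := x <+: w.drop p

theorem occ_le {x w : List ℕ} {p : ℕ} (h : Occ x w p) (hx : x ≠ []) :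
    p + x.length ≤ w.length := by
  have h1 : x.length ≤ w.length - p := by simpa using h.length_le
  have h2 : 0 < x.length := List.length_pos_iff.mpr hx
  omega

theorem occ_append_left {x u v : List ℕ} {p : ℕ} (h : Occ x (u ++ v) p)
    (hb : p + x.length ≤ u.length) : Occ x u p := by
  unfold Occ at h ⊢
  rw [List.drop_append] at h
  have hp : p ≤ u.length := by
    have : 0 ≤ x.length := Nat.zero_le _
    omega
  rw [Nat.sub_eq_zero_of_le hp, List.drop_zero] at h
  refine List.prefix_of_prefix_length_le h (List.prefix_append _ _) ?_
  simp
  omega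

theorem occ_append_right {x u v : List ℕ} {p : ℕ} (h : Occ x (u ++ v) p)
    (hp : u.length ≤ p) : Occ x v (p - u.length) := by
  unfold Occ at h ⊢
  rw [List.drop_append, List.drop_eq_nil_of_le hp, List.nil_append] at h
  exact h

theorem occ_of_prefix {x y w : List ℕ} {p : ℕ} (hy : y <+: x) (h : Occ x w p) :
    Occ y w p := hy.trans h

theorem occ_of_suffix {x y w : List ℕ} {p : ℕ} (hy : y <:+ x) (h : Occ x w p) :
    Occ y w (p + (x.length - y.length)) := by
  obtain ⟨z, hz⟩ := hy
  obtain ⟨r, hr⟩ := h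
  have hlen : x.length - y.length = z.length := by
    have := congrArg List.length hz
    simp at this
    omega
  rw [hlen]
  unfold Occ
  rw [← List.drop_drop, ← hr, ← hz]
  rw [List.append_assoc, List.drop_left]
  exact ⟨r, rfl⟩

theorem occ_middle {x u m v : List ℕ} {p : ℕ} (h : Occ x (u ++ (m ++ v)) p)
    (h1 : p ≤ u.length) (h2 : u.length + m.length ≤ p + x.length) :
    Occ m x (u.length - p) := by
  obtain ⟨r, hr⟩ := h
  have key : (u ++ (m ++ v)).drop u.length = m ++ v := List.drop_left
  have key2 : ((u ++ (m ++ v)).drop p).drop (u.length - p) = m ++ v := by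
    rw [List.drop_drop]
    have : p + (u.length - p) = u.length := by omega
    rw [this, key]
  rw [← hr] at key2
  have hxl : u.length - p ≤ x.length := by omega
  rw [List.drop_append, Nat.sub_eq_zero_of_le hxl, List.drop_zero] at key2
  -- key2 : x.drop (u.length - p) ++ r = m ++ v
  have hm : m <+: x.drop (u.length - p) ++ r := key2 ▸ List.prefix_append m v
  refine List.prefix_of_prefix_length_le hm (List.prefix_append _ _) ?_
  simp
  omega

theorem infix_occ {x w : List ℕ} (h : x <:+: w) : ∃ p, Occ x w p := by
  obtain ⟨s, t, hst⟩ := h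
  refine ⟨s.length, ?_⟩
  unfold Occ
  rw [← hst, List.append_assoc, List.drop_left]
  exact ⟨t, rfl⟩

theorem occ_infix {x w : List ℕ} {p : ℕ} (h : Occ x w p) : x <:+: w :=
  h.isInfix.trans (List.drop_suffix p w).isInfix

theorem occ_zero_prefix {x w : List ℕ} (h : Occ x w 0) : x <+: w := by
  simpa [Occ] using h

theorem occ_suffix {x w : List ℕ} {p : ℕ} (h : Occ x w p)
    (hl : p + x.length = w.length) : x <:+ w := by
  have hx : x = w.drop p := by
    refine List.IsPrefix.eq_of_length h ?_
    simp; omega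
  rw [hx]; exact List.drop_suffix p w

theorem prefix_head? {x w : List ℕ} (h : x <+: w) (hx : x ≠ []) :
    w.head? = x.head? := by
  obtain ⟨t, rfl⟩ := h
  rw [List.head?_append]
  cases x with
  | nil => exact absurd rfl hx
  | cons a l => rfl

theorem suffix_getLast? {x w : List ℕ} (h : x <:+ w) (hx : x ≠ []) :
    w.getLast? = x.getLast? := by
  obtain ⟨t, rfl⟩ := h
  rw [List.getLast?_append]
  rw [List.getLast?_eq_getLast hx]
  rfl

theorem Smain : ∀ k, (∀ p, Occ (sw (k+1)) (sw (k+3)) p → p = 0 ∨ p = Nat.fib (k+2)) ∧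
    ¬ sw (k+1) <:+: sw (k+2) := by
  intro k
  induction k using Nat.strong_induction_on with
  | _ k ih =>
  rcases k with _ | _ | m
  · -- k = 0 : sw 1 = [0], sw 3 = [0,0]
    constructor
    · intro p h
      have hle := occ_le h (sw_ne_nil 0)
      rw [sw_len 1, sw_len 3] at hle
      have f1 : Nat.fib 1 = 1 := rfl
      have f3 : Nat.fib 3 = 2 := rfl
      have hb : p ≤ 1 := by omega
      have f2 : Nat.fib 2 = 1 := rfl
      rw [f2]
      interval_cases p
      · exact Or.inl rfl
      · exact Or.inr rfl
    · intro h
      have e1 : sw 1 = [0] := rfl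
      have e2 : sw 2 = [1] := rfl
      rw [e1, e2] at h
      revert h; decide
  · -- k = 1 : sw 2 = [1], sw 4 = [1,0,1]
    constructor
    · intro p h
      have hle := occ_le h (sw_ne_nil 1)
      rw [sw_len 2, sw_len 4] at hle
      have f2 : Nat.fib 2 = 1 := rfl
      have f4 : Nat.fib 4 = 3 := rfl
      have hb : p ≤ 2 := by omega
      have hf : Nat.fib 3 = 2 := rfl
      rw [hf]
      have e2 : sw 2 = [1] := by decide
      have e4 : sw 4 = [1, 0, 1] := by decide
      rw [e2, e4] at h
      interval_cases p
      · exact Or.inl rfl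
      · exfalso; unfold Occ at h; revert h; decide
      · exact Or.inr rfl
    · intro h
      have e1 : sw 2 = [1] := rfl
      have e2 : sw 3 = [0, 0] := by decide
      rw [e1, e2] at h
      revert h; decide
  · -- k = m + 2
    have ihm := ih m (by omega)
    have ihm1 := ih (m+1) (by omega)
    have L0 : (sw m).length = Nat.fib m := sw_len m
    have L1 : (sw (m+1)).length = Nat.fib (m+1) := sw_len (m+1)
    have L2 : (sw (m+2)).length = Nat.fib (m+2) := sw_len (m+2)
    have L3 : (sw (m+3)).length = Nat.fib (m+3) := sw_len (m+3)
    have L4 : (sw (m+4)).length = Nat.fib (m+4) := sw_len (m+4)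
    have L5 : (sw (m+5)).length = Nat.fib (m+5) := sw_len (m+5)
    have fib2 : Nat.fib (m+2) = Nat.fib m + Nat.fib (m+1) := Nat.fib_add_two
    have fib3 : Nat.fib (m+3) = Nat.fib (m+1) + Nat.fib (m+2) := Nat.fib_add_two
    have fib4 : Nat.fib (m+4) = Nat.fib (m+2) + Nat.fib (m+3) := Nat.fib_add_two
    have fib5 : Nat.fib (m+5) = Nat.fib (m+3) + Nat.fib (m+4) := Nat.fib_add_two
    have pos1 := fib_pos' m
    have pos2 := fib_pos' (m+1)
    constructor
    · -- occurrences of sw (m+3) in sw (m+5) are only 0 and fib (m+4)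
      intro p hp0
      by_cases hq0 : p = 0
      · exact Or.inl hq0
      by_cases hqF : p = Nat.fib (m+4)
      · exact Or.inr hqF
      exfalso
      have hp : Occ (sw (m+3)) (sw (m+3) ++ (sw (m+2) ++ sw (m+3))) p := by
        rw [← sw_rec (m+2)]; exact hp0
      have hle := occ_le hp0 (sw_ne_nil (m+2))
      rw [L3, L5] at hle
      rcases Nat.lt_or_ge p (Nat.fib (m+2)) with h | h
      · -- occurrence of the prefix sw (m+1) inside the first block
        have hpre : sw (m+1) <+: sw (m+3) := by
          rw [sw_rec m]; exact List.prefix_append _ _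
        have h1 : Occ (sw (m+1)) (sw (m+3) ++ (sw (m+2) ++ sw (m+3))) p :=
          occ_of_prefix hpre hp
        have h2 : Occ (sw (m+1)) (sw (m+3)) p :=
          occ_append_left h1 (by rw [L1, L3]; omega)
        rcases ihm.1 p h2 with e | e <;> omega
      · rcases le_or_gt p (Nat.fib (m+3)) with h' | h'
        · -- middle block sw (m+2) covered : sw (m+2) is a factor of sw (m+3)
          have hmid := occ_middle hp (by rw [L3]; omega) (by rw [L2, L3]; omega)
          exact ihm1.2 (occ_infix hmid)
        · -- occurrence of the suffix sw (m+1) inside the last block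
          have hsuf : sw (m+1) <:+ sw (m+3) := by
            rw [sw_rec m]
            exact ⟨sw (m+1) ++ sw m, by rw [List.append_assoc]⟩
          have h3 := occ_of_suffix hsuf hp
          have hsh : (sw (m+3)).length - (sw (m+1)).length = Nat.fib (m+2) := by
            rw [L1, L3]; omega
          rw [hsh] at h3
          have hassoc : sw (m+3) ++ (sw (m+2) ++ sw (m+3)) =
              (sw (m+3) ++ sw (m+2)) ++ sw (m+3) := by rw [List.append_assoc]
          rw [hassoc] at h3
          have hub : (sw (m+3) ++ sw (m+2)).length ≤ p + Nat.fib (m+2) := by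
            rw [List.length_append, L2, L3]; omega
          have h4 := occ_append_right h3 hub
          rw [List.length_append, L2, L3] at h4
          rcases ihm.1 _ h4 with e | e <;> omega
    · -- sw (m+3) is not a factor of sw (m+4)
      intro hinf
      obtain ⟨p, hp0⟩ := infix_occ hinf
      have hp : Occ (sw (m+3)) (sw (m+2) ++ (sw (m+1) ++ sw (m+2))) p := by
        rw [← sw_rec (m+1)]; exact hp0
      have hle := occ_le hp0 (sw_ne_nil (m+2))
      rw [L3, L4] at hle
      have hmid := occ_middle hp (by rw [L2]; omega) (by rw [L1, L2]; omega)
      rw [L2] at hmid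
      rcases ihm.1 _ hmid with e | e
      · -- fib (m+2) - p = 0, so p = fib (m+2) : sw (m+3) is a suffix of sw (m+4)
        have hpe : p = Nat.fib (m+2) := by omega
        have hs : sw (m+3) <:+ sw (m+4) :=
          occ_suffix hp0 (by rw [L3, L4]; omega)
        have e2 := suffix_getLast? hs (sw_ne_nil (m+2))
        rw [sw_getLast? (m+3), sw_getLast? (m+2)] at e2
        simp at e2
        omega
      · -- p = 0 : sw (m+3) is a prefix of sw (m+4)
        have hpe : p = 0 := by omega
        rw [hpe] at hp0
        have hpre := occ_zero_prefix hp0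
        have e2 := prefix_head? hpre (sw_ne_nil (m+2))
        rw [sw_head? (m+3), sw_head? (m+2)] at e2
        simp at e2
        omega

/-- for all `n ≥ -1`, `w_n` is not a factor of `w_{n+1}`. -/
theorem singular_word_not_factor_next : ∀ n : ℕ, ¬ (sw (n + 1) <:+: sw (n + 2)) := by
  exact fun n => (Smain n).2
end

section
/- Let m ≥ 2 and let φ_m be the m-bonacci morphism. For finite words x, y over A_m: if φ_m(x) is a factor of φ_m(y) and x does not end with the letter m−1, then x is a factor of y. -/
/-- The `m`-bonacci morphism on letters: `i ↦ 0(i+1)` for `i ≤ m-2`, `(m-1) ↦ 0`. -/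
def phi (m a : ℕ) : List ℕ := if a = m - 1 then [0] else [0, a + 1]

/-- The `m`-bonacci morphism on words. -/
def phiW (m : ℕ) (w : List ℕ) : List ℕ := w.flatMap (phi m)

/-- The finite `m`-bonacci words `h_n = φ_m^n(0)`. -/
def hb (m : ℕ) : ℕ → List ℕ
  | 0 => [0]
  | n+1 => phiW m (hb m n)

/-- The palindromic prefixes of the `m`-bonacci word, shifted:
`ub m n` is the paper's `u_{n+1}` (so `ub m 0 = u₁ = ε`, and `u_{n+2} = h_n u_{n+1}`). -/
def ub (m : ℕ) : ℕ → List ℕ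
  | 0 => []
  | n+1 => hb m n ++ ub m n

lemma phiW_cons (m a : ℕ) (t : List ℕ) : phiW m (a :: t) = phi m a ++ phiW m t := by
  simp [phiW]

lemma phiW_head (m : ℕ) {w : List ℕ} (hw : w ≠ []) : ∃ r, phiW m w = 0 :: r := by
  cases w with
  | nil => simp at hw
  | cons a t =>
    rw [phiW_cons]
    unfold phi
    split
    · exact ⟨phiW m t, rfl⟩
    · exact ⟨(a+1) :: phiW m t, rfl⟩

/-- boundary synchronization -/
lemma phiW_boundary (m : ℕ) : ∀ (y p z : List ℕ), phiW m y = p ++ z →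
    (z = [] ∨ ∃ r, z = 0 :: r) →
    ∃ y₁ y₂, y = y₁ ++ y₂ ∧ p = phiW m y₁ ∧ z = phiW m y₂ := by
  intro y
  induction y with
  | nil =>
    intro p z h hz
    simp only [phiW, List.flatMap_nil] at h
    obtain ⟨hp, hz'⟩ := List.append_eq_nil_iff.mp h.symm
    exact ⟨[], [], rfl, by simp [phiW, hp], by simp [phiW, hz']⟩
  | cons a t ih =>
    intro p z h hz
    cases p with
    | nil =>
      exact ⟨[], a :: t, rfl, rfl, by simpa using h.symm⟩
    | cons c p' =>
      rw [phiW_cons] at h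
      by_cases ha : a = m - 1
      · rw [phi, if_pos ha] at h
        simp only [List.cons_append, List.singleton_append, List.cons.injEq] at h
        obtain ⟨hc, h2⟩ := h
        obtain ⟨y₁, y₂, hy, hp, hzz⟩ := ih p' z h2 hz
        refine ⟨a :: y₁, y₂, by simp [hy], ?_, hzz⟩
        rw [phiW_cons, phi, if_pos ha, hp, hc]
        rfl
      · rw [phi, if_neg ha] at h
        simp only [List.cons_append, List.cons.injEq] at h
        obtain ⟨hc, h2⟩ := h
        cases p' with
        | nil =>
          simp only [List.nil_append] at h2
          exfalso
          rcases hz with hz | ⟨r, hr⟩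
          · rw [hz] at h2; exact List.cons_ne_nil _ _ h2
          · rw [hr] at h2
            simp only [List.cons.injEq] at h2
            exact Nat.succ_ne_zero a h2.1
        | cons d p'' =>
          simp only [List.cons_append, List.cons.injEq] at h2
          obtain ⟨hd, h3⟩ := h2
          obtain ⟨y₁, y₂, hy, hp, hzz⟩ := ih p'' z h3 hz
          refine ⟨a :: y₁, y₂, by simp [hy], ?_, hzz⟩
          rw [phiW_cons, phi, if_neg ha, hp, hc, hd]
          rfl

lemma getLast?_tail {a : ℕ} {x : List ℕ} (hx : x ≠ []) :
    (a :: x).getLast? = x.getLast? := by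
  cases x with
  | nil => simp at hx
  | cons b t => simp [List.getLast?_cons_cons]

/-- prefix version -/
lemma phiW_prefix (m : ℕ) : ∀ (x y : List ℕ),
    x.getLast? ≠ some (m - 1) → phiW m x <+: phiW m y → x <+: y := by
  intro x
  induction x with
  | nil => intro y _ _; exact List.nil_prefix
  | cons a x' ih =>
    intro y hlast hpre
    cases y with
    | nil =>
      exfalso
      obtain ⟨r, hr⟩ := phiW_head m (List.cons_ne_nil a x')
      rw [hr] at hpre
      simp only [phiW, List.flatMap_nil] at hpre
      exact List.cons_ne_nil _ _ (List.prefix_nil.mp hpre)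
    | cons b y' =>
      rw [phiW_cons, phiW_cons] at hpre
      by_cases ha : a = m - 1
      · have hx' : x' ≠ [] := by
          intro h; rw [h] at hlast; simp [ha] at hlast
        by_cases hb : b = m - 1
        · -- same letter
          have hab : a = b := ha.trans hb.symm
          subst hab
          have h2 : phiW m x' <+: phiW m y' :=
            (List.prefix_append_right_inj (phi m a)).mp hpre
          have h3 : x' <+: y' := ih y' (by rwa [getLast?_tail hx'] at hlast) h2
          obtain ⟨v, hv⟩ := h3
          exact ⟨v, by simp [hv]⟩
        · exfalso
          obtain ⟨r, hr⟩ := phiW_head m hx'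
          rw [phi, if_pos ha, hr, phi, if_neg hb] at hpre
          simp only [List.singleton_append, List.cons_append] at hpre
          have := ((List.cons_prefix_cons.mp hpre).2)
          have := (List.cons_prefix_cons.mp this).1
          exact Nat.succ_ne_zero b this.symm
      · by_cases hb : b = m - 1
        · exfalso
          rw [phi, if_neg ha, phi, if_pos hb] at hpre
          simp only [List.cons_append, List.singleton_append] at hpre
          have h2 := (List.cons_prefix_cons.mp hpre).2
          cases hy' : y' with
          | nil =>
            rw [hy'] at h2
            simp only [phiW, List.flatMap_nil] at h2
            exact List.cons_ne_nil _ _ (List.prefix_nil.mp h2)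
          | cons c t =>
            obtain ⟨r, hr⟩ := phiW_head m (hy' ▸ List.cons_ne_nil c t)
            rw [hr] at h2
            exact Nat.succ_ne_zero a (List.cons_prefix_cons.mp h2).1
        · rw [phi, if_neg ha, phi, if_neg hb] at hpre
          simp only [List.cons_append] at hpre
          obtain ⟨h0, h1⟩ := List.cons_prefix_cons.mp hpre
          obtain ⟨hab, h2⟩ := List.cons_prefix_cons.mp h1
          have hab' : a = b := Nat.succ_injective hab
          subst hab'
          have hlast' : x'.getLast? ≠ some (m - 1) := by
            cases x' with
            | nil => simp
            | cons c t => rwa [getLast?_tail (by simp)] at hlast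
          obtain ⟨v, hv⟩ := ih y' hlast' h2
          exact ⟨v, by simp [hv]⟩

/-- for words `x, y` over `A_m`, if `φ_m(x)` is a factor of `φ_m(y)`
and `x` does not end with the letter `m-1`, then `x` is a factor of `y`. -/
theorem phi_factor :
    ∀ m : ℕ, 2 ≤ m → ∀ x y : List ℕ,
      (∀ a ∈ x, a < m) → (∀ a ∈ y, a < m) →
      x.getLast? ≠ some (m - 1) →
      phiW m x <:+: phiW m y → x <:+: y := by
  intro m _ x y _ _ hlast hinf
  cases hx : x with
  | nil => exact ⟨[], y, by simp⟩
  | cons a t =>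
    subst hx
    obtain ⟨s, u, h⟩ := hinf
    obtain ⟨r, hr⟩ := phiW_head m (List.cons_ne_nil a t)
    rw [List.append_assoc] at h
    obtain ⟨y₁, y₂, hy, hs, hz⟩ := phiW_boundary m y s (phiW m (a :: t) ++ u) h.symm
      (Or.inr ⟨r ++ u, by rw [hr]; rfl⟩)
    have hpre : phiW m (a :: t) <+: phiW m y₂ := ⟨u, hz⟩
    have := phiW_prefix m (a :: t) y₂ hlast hpre
    obtain ⟨v, hv⟩ := this
    exact ⟨y₁, v, by simp [hy, ← hv]⟩
end
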